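/- Multivariate delta method: let θ ∈ R^q, let (X_n) be a sequence of R^q-valued random vectors such that √n (X_n − θ) converges in distribution to the centered Gaussian distribution on R^q with covariance matrix Σ, and let φ : R^q → R be continuously differentiable in a neighbourhood of θ with gradient V = ∇φ(θ). Then √n ( φ(X_n) − φ(θ) ) converges in distribution to the centered normal distribution on R with variance V^T Σ V. -/

import Mathlib

/-!
Put `Y n = √n • (X n - θ)`. The Cramér–Wold hypothesis for `v = ±eᵢ` gives convergence of the
distribution functions of `±(Y n)ᵢ` far out in the lower tail, so every coordinate of `Y n`, hence
`Y n` itself, is bounded in probability. Since `φ(θ + h) = φ(θ) + Dφ(θ) h + o(‖h‖)`, this makes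
`√n (φ(X n) - φ(θ)) - Dφ(θ)(Y n)` tend to `0` in probability, and by Slutsky's lemma
`√n (φ(X n) - φ(θ))` inherits the limit law of `Dφ(θ)(Y n) = ∑ᵢ Vᵢ (Y n)ᵢ`, which is the
hypothesis for `v = V`.
-/

open MeasureTheory ProbabilityTheory Filter Set Topology

lemma ProbabilityTheory.gaussianReal_singleton_eq_zero {m x : ℝ} (v : NNReal) (hx : x ≠ m) :
    gaussianReal m v {x} = 0 := by
  by_cases hv : v = 0
  · simp [hv, gaussianReal_zero_var, hx]
  · have := nullSingletonClass_gaussianReal (μ := m) hv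
    exact measure_singleton x

lemma eventually_ne_nhdsNE {X : Type*} [TopologicalSpace X] [T1Space X] (t a : X) :
    ∀ᶠ b in 𝓝[≠] t, b ≠ a := by
  rcases eq_or_ne t a with rfl | h
  · exact self_mem_nhdsWithin
  · exact eventually_ne_nhdsWithin h

namespace MeasureTheory

lemma continuousAt_measure_Iic {μ : Measure ℝ} [IsProbabilityMeasure μ] {t : ℝ}
    (ht : μ {t} = 0) : ContinuousAt (fun b => μ (Iic b)) t := by
  -- `cdf μ` is right-continuous and its jump at `t` is `μ {t}`.
  have hcdf : ContinuousAt (cdf μ) t := by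
    rw [(monotone_cdf μ).continuousAt_iff_leftLim_eq_rightLim, (cdf μ).rightLim_eq]
    have hjump := (cdf μ).measure_singleton t
    rw [measure_cdf, ht, eq_comm, ENNReal.ofReal_eq_zero, sub_nonpos] at hjump
    exact le_antisymm ((monotone_cdf μ).leftLim_le le_rfl) hjump
  simp_rw [← ofReal_cdf]
  exact ENNReal.continuous_ofReal.continuousAt.comp hcdf

lemma tendsto_measure_Iic_atBot (μ : Measure ℝ) [IsFiniteMeasure μ] :
    Tendsto (fun b => μ (Iic b)) atBot (𝓝 0) := by
  have hempty : ⋂ b : ℝ, Iic b = ∅ :=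
    eq_empty_of_forall_notMem fun x hx => not_le.2 (sub_one_lt x) (mem_iInter.1 hx (x - 1))
  simpa [hempty, Function.comp_def] using tendsto_measure_iInter_atBot (μ := μ)
    (fun _ => measurableSet_Iic.nullMeasurableSet) monotone_Iic ⟨0, measure_ne_top _ _⟩

end MeasureTheory

lemma ContinuousLinearMap.apply_eq_sum_apply_single_mul {ι : Type*} [Fintype ι] [DecidableEq ι]
    (L : (ι → ℝ) →L[ℝ] ℝ) (y : ι → ℝ) : L y = ∑ i, L (Pi.single i 1) * y i := by
  conv_lhs => rw [← Finset.univ_sum_single y]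
  refine (map_sum L _ _).trans (Finset.sum_congr rfl fun i _ => ?_)
  rw [mul_comm, ← smul_eq_mul, ← L.map_smul, ← Pi.single_smul', smul_eq_mul, mul_one]

lemma HasFDerivAt.eventually_norm_smul_sub_fderiv_lt {E F : Type*}
    [NormedAddCommGroup E] [NormedSpace ℝ E] [NormedAddCommGroup F] [NormedSpace ℝ F]
    {f : E → F} {f' : E →L[ℝ] F} {θ : E} (hf : HasFDerivAt f f' θ) {ε K : ℝ} (hε : 0 < ε)
    (hK : 0 < K) :
    ∀ᶠ c : ℝ in atTop, ∀ x, ‖c • (x - θ)‖ ≤ K → ‖c • (f x - f θ) - f' (c • (x - θ))‖ < ε := by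
  obtain ⟨r, hr, hsmall⟩ :=
    Metric.eventually_nhds_iff.1 (hf.isLittleO.def (by positivity : 0 < ε / (2 * K)))
  filter_upwards [eventually_gt_atTop (K / r)] with c hc x hx
  have hc0 : 0 < c := (div_pos hK hr).trans hc
  rw [norm_smul, Real.norm_of_nonneg hc0.le] at hx
  have hdist : dist x θ < r := by
    rw [dist_eq_norm, ← mul_lt_mul_iff_of_pos_left hc0]
    exact hx.trans_lt ((div_lt_iff₀ hr).1 hc)
  calc ‖c • (f x - f θ) - f' (c • (x - θ))‖ = c * ‖f x - f θ - f' (x - θ)‖ := by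
        rw [map_smul, ← smul_sub, norm_smul, Real.norm_of_nonneg hc0.le]
    _ ≤ c * (ε / (2 * K) * ‖x - θ‖) := by gcongr; exact hsmall hdist
    _ = ε / (2 * K) * (c * ‖x - θ‖) := by ring
    _ ≤ ε / (2 * K) * K := by gcongr
    _ < ε := by field_simp; linarith

namespace ProbabilityTheory

variable {Ω ι : Type*} [MeasurableSpace Ω] {P : Measure Ω} {l : Filter ι}

def BoundedInProbability {E : Type*} [Norm E] (P : Measure Ω) (l : Filter ι)
    (Y : ι → Ω → E) : Prop :=
  ∀ ε > 0, ∃ M : ℝ, ∀ᶠ n in l, P {ω | M < ‖Y n ω‖} ≤ ε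

lemma exists_eventually_measure_le_lt_of_tendsto {Z : ι → Ω → ℝ} {μ : Measure ℝ}
    [IsFiniteMeasure μ]
    (hZ : ∀ᶠ b in atBot, Tendsto (fun n => P {ω | Z n ω ≤ b}) l (𝓝 (μ (Iic b))))
    {ε : ENNReal} (hε : 0 < ε) : ∃ b, ∀ᶠ n in l, P {ω | Z n ω ≤ b} < ε := by
  obtain ⟨b, hb, hμb⟩ := (hZ.and ((tendsto_measure_Iic_atBot μ).eventually_lt_const hε)).exists
  exact ⟨b, hb.eventually_lt_const hμb⟩

lemma boundedInProbability_of_tendsto_cdf {Z : ι → Ω → ℝ} {μ ν : Measure ℝ}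
    [IsFiniteMeasure μ] [IsFiniteMeasure ν]
    (hZ : ∀ᶠ b in atBot, Tendsto (fun n => P {ω | Z n ω ≤ b}) l (𝓝 (μ (Iic b))))
    (hnegZ : ∀ᶠ b in atBot, Tendsto (fun n => P {ω | -Z n ω ≤ b}) l (𝓝 (ν (Iic b)))) :
    BoundedInProbability P l Z := by
  intro ε hε
  obtain ⟨b, hb⟩ := exists_eventually_measure_le_lt_of_tendsto hZ (ENNReal.half_pos hε.ne')
  obtain ⟨b', hb'⟩ := exists_eventually_measure_le_lt_of_tendsto hnegZ (ENNReal.half_pos hε.ne')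
  refine ⟨max (-b) (-b'), ?_⟩
  filter_upwards [hb, hb'] with n hn hn'
  have htails : {ω | max (-b) (-b') < ‖Z n ω‖} ⊆ {ω | Z n ω ≤ b} ∪ {ω | -Z n ω ≤ b'} := by
    intro ω (hω : max (-b) (-b') < |Z n ω|)
    rcases lt_abs.1 hω with h | h
    · exact Or.inr (show -Z n ω ≤ b' by linarith [le_max_right (-b) (-b')])
    · exact Or.inl (show Z n ω ≤ b by linarith [le_max_left (-b) (-b')])
  calc P {ω | max (-b) (-b') < ‖Z n ω‖}
      ≤ P {ω | Z n ω ≤ b} + P {ω | -Z n ω ≤ b'} :=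
        (measure_mono htails).trans (measure_union_le _ _)
    _ ≤ ε / 2 + ε / 2 := add_le_add hn.le hn'.le
    _ = ε := ENNReal.add_halves ε

lemma BoundedInProbability.pi {κ : Type*} [Fintype κ] {E : κ → Type*}
    [∀ i, SeminormedAddCommGroup (E i)] {Y : ι → Ω → ∀ i, E i}
    (hY : ∀ i, BoundedInProbability P l fun n ω => Y n ω i) : BoundedInProbability P l Y := by
  intro ε hε
  choose M hM using fun i =>
    hY i _ (ENNReal.div_pos hε.ne' (ENNReal.natCast_ne_top (Fintype.card κ)))
  refine ⟨∑ i, |M i|, ?_⟩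
  filter_upwards [eventually_all.2 hM] with n hn
  have hcover : {ω | ∑ i, |M i| < ‖Y n ω‖} ⊆ ⋃ i, {ω | M i < ‖Y n ω i‖} := by
    intro ω hω
    obtain ⟨i, hi⟩ : ∃ i, ∑ i, |M i| < ‖Y n ω i‖ := by
      simpa using (pi_norm_le_iff_of_nonneg (by positivity)).not.1 (not_le.2 hω)
    exact mem_iUnion.2 ⟨i, (le_abs_self _).trans_lt
      ((Finset.single_le_sum (fun j _ => abs_nonneg (M j)) (Finset.mem_univ i)).trans_lt hi)⟩
  calc P {ω | ∑ i, |M i| < ‖Y n ω‖} ≤ ∑ i, P {ω | M i < ‖Y n ω i‖} :=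
        (measure_mono hcover).trans (measure_iUnion_fintype_le _ _)
    _ ≤ ∑ _i : κ, ε / Fintype.card κ := Finset.sum_le_sum fun i _ => hn i
    _ ≤ ε := by
        rw [Finset.sum_const, Finset.card_univ, nsmul_eq_mul]
        exact ENNReal.mul_div_le

theorem _root_.HasFDerivAt.tendstoInMeasure_smul_sub_fderiv {E F : Type*}
    [NormedAddCommGroup E] [NormedSpace ℝ E] [NormedAddCommGroup F] [NormedSpace ℝ F]
    {f : E → F} {f' : E →L[ℝ] F} {θ : E} (hf : HasFDerivAt f f' θ) {c : ι → ℝ}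
    (hc : Tendsto c l atTop) {X : ι → Ω → E}
    (hX : BoundedInProbability P l fun n ω => c n • (X n ω - θ)) :
    TendstoInMeasure P (fun n ω => c n • (f (X n ω) - f θ) - f' (c n • (X n ω - θ))) l 0 := by
  rw [tendstoInMeasure_iff_dist]
  intro ε hε
  rw [ENNReal.tendsto_nhds_zero]
  intro δ hδ
  obtain ⟨M, hM⟩ := hX δ hδ
  filter_upwards [hM, hc.eventually (hf.eventually_norm_smul_sub_fderiv_lt hε
    (by positivity : 0 < |M| + 1))] with n hn hsmall
  refine le_trans (measure_mono fun ω (hω : ε ≤ dist _ _) => ?_) hn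
  show M < _
  by_contra! hle
  rw [Pi.zero_apply, dist_zero_right] at hω
  exact (hsmall _ (by linarith [le_abs_self M])).not_ge hω

/-- Slutsky's lemma, for distribution functions. -/
theorem tendsto_measure_le_of_tendstoInMeasure_sub [l.NeBot] {A B : ι → Ω → ℝ} {μ : Measure ℝ}
    [IsProbabilityMeasure μ] {t : ℝ} (ht : μ {t} = 0)
    (hB : ∀ᶠ b in 𝓝[≠] t, Tendsto (fun n => P {ω | B n ω ≤ b}) l (𝓝 (μ (Iic b))))
    (hAB : TendstoInMeasure P (fun n ω => A n ω - B n ω) l 0) :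
    Tendsto (fun n => P {ω | A n ω ≤ t}) l (𝓝 (μ (Iic t))) := by
  have hsmall : ∀ η > 0, Tendsto (fun n => P {ω | η ≤ |A n ω - B n ω|}) l (𝓝 0) := by
    simpa [Real.dist_eq] using tendstoInMeasure_iff_dist.1 hAB
  have hcont := continuousAt_measure_Iic ht
  refine tendsto_of_le_liminf_of_limsup_le ?_ ?_
  · refine le_of_tendsto (hcont.tendsto.mono_left nhdsWithin_le_nhds : Tendsto _ (𝓝[<] t) _) ?_
    filter_upwards [nhdsWithin_mono t (fun b hb => ne_of_lt hb) hB, self_mem_nhdsWithin]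
      with b hb (hbt : b < t)
    have hcover : ∀ n, {ω | B n ω ≤ b} ⊆ {ω | A n ω ≤ t} ∪ {ω | t - b ≤ |A n ω - B n ω|} := by
      intro n ω (hω : B n ω ≤ b)
      by_cases hA : A n ω ≤ t
      · exact Or.inl hA
      · exact Or.inr (show t - b ≤ |A n ω - B n ω| by linarith [le_abs_self (A n ω - B n ω)])
    calc μ (Iic b) = liminf (fun n => P {ω | B n ω ≤ b}) l := hb.liminf_eq.symm
      _ ≤ liminf (fun n => P {ω | A n ω ≤ t} + P {ω | t - b ≤ |A n ω - B n ω|}) l :=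
          liminf_le_liminf <| .of_forall fun n =>
            (measure_mono (hcover n)).trans (measure_union_le _ _)
      _ = liminf (fun n => P {ω | A n ω ≤ t}) l :=
          ENNReal.liminf_add_of_right_tendsto_zero (hsmall _ (sub_pos.2 hbt)) _
  · refine ge_of_tendsto (hcont.tendsto.mono_left nhdsWithin_le_nhds : Tendsto _ (𝓝[>] t) _) ?_
    filter_upwards [nhdsWithin_mono t (fun b hb => ne_of_gt hb) hB, self_mem_nhdsWithin]
      with b hb (hbt : t < b)
    have hcover : ∀ n, {ω | A n ω ≤ t} ⊆ {ω | B n ω ≤ b} ∪ {ω | b - t ≤ |A n ω - B n ω|} := by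
      intro n ω (hω : A n ω ≤ t)
      by_cases hB : B n ω ≤ b
      · exact Or.inl hB
      · exact Or.inr (show b - t ≤ |A n ω - B n ω| by linarith [neg_abs_le (A n ω - B n ω)])
    calc limsup (fun n => P {ω | A n ω ≤ t}) l
        ≤ limsup (fun n => P {ω | B n ω ≤ b} + P {ω | b - t ≤ |A n ω - B n ω|}) l :=
          limsup_le_limsup <| .of_forall fun n =>
            (measure_mono (hcover n)).trans (measure_union_le _ _)
      _ = limsup (fun n => P {ω | B n ω ≤ b}) l :=
          ENNReal.limsup_add_of_right_tendsto_zero (hsmall _ (sub_pos.2 hbt)) _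
      _ = μ (Iic b) := hb.limsup_eq

end ProbabilityTheory

theorem multivariate_delta_method_general
    {q : ℕ} {Ω : Type*} [MeasurableSpace Ω] (P : Measure Ω)
    (θ : Fin q → ℝ) (X : ℕ → Ω → (Fin q → ℝ))
    (Sig : Matrix (Fin q) (Fin q) ℝ)
    (hconv : ∀ v : Fin q → ℝ, ∀ t : ℝ,
      gaussianReal 0 (∑ i, ∑ j, v i * Sig i j * v j).toNNReal {t} = 0 →
      Tendsto
        (fun n : ℕ => P {ω | ∑ i, v i * (Real.sqrt n * (X n ω i - θ i)) ≤ t})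
        atTop
        (nhds (gaussianReal 0 (∑ i, ∑ j, v i * Sig i j * v j).toNNReal (Set.Iic t))))
    (φ : (Fin q → ℝ) → ℝ)
    (hφ : ∃ u ∈ nhds θ, ContDiffOn ℝ 1 φ u)
    (V : Fin q → ℝ) (hV : ∀ i, V i = fderiv ℝ φ θ (Pi.single i 1)) :
    ∀ t : ℝ,
      gaussianReal 0 (∑ i, ∑ j, V i * Sig i j * V j).toNNReal {t} = 0 →
      Tendsto (fun n : ℕ => P {ω | Real.sqrt n * (φ (X n ω) - φ θ) ≤ t})
        atTop
        (nhds (gaussianReal 0 (∑ i, ∑ j, V i * Sig i j * V j).toNNReal (Set.Iic t))) := by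
  intro t ht
  have hconv_near (v : Fin q → ℝ) : ∀ᶠ b in 𝓝[≠] t, Tendsto
      (fun n : ℕ => P {ω | ∑ i, v i * (Real.sqrt n * (X n ω i - θ i)) ≤ b}) atTop
      (𝓝 (gaussianReal 0 (∑ i, ∑ j, v i * Sig i j * v j).toNNReal (Iic b))) := by
    filter_upwards [eventually_ne_nhdsNE t 0] with b hb
    exact hconv v b (gaussianReal_singleton_eq_zero _ hb)
  have hcoord (i : Fin q) (s : ℝ) (hs : s * s = 1) : ∀ᶠ b in atBot, Tendsto
      (fun n : ℕ => P {ω | s * (Real.sqrt n * (X n ω i - θ i)) ≤ b}) atTop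
      (𝓝 (gaussianReal 0 (Sig i i).toNNReal (Iic b))) := by
    filter_upwards [eventually_lt_atBot 0] with b hb
    simpa [Pi.single_apply, mul_right_comm s, hs] using
      hconv (Pi.single i s) b (gaussianReal_singleton_eq_zero _ hb.ne)
  have hbounded : BoundedInProbability P atTop fun (n : ℕ) ω => Real.sqrt n • (X n ω - θ) :=
    BoundedInProbability.pi fun i => boundedInProbability_of_tendsto_cdf
      (by simpa using hcoord i 1 (one_mul 1)) (by simpa using hcoord i (-1) (by norm_num))
  obtain ⟨u, hu, hφu⟩ := hφ
  have hφθ : HasFDerivAt φ (fderiv ℝ φ θ) θ :=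
    ((hφu.contDiffAt hu).differentiableAt one_ne_zero).hasFDerivAt
  refine tendsto_measure_le_of_tendstoInMeasure_sub ht (hconv_near V) ?_
  convert hφθ.tendstoInMeasure_smul_sub_fderiv
    (Real.tendsto_sqrt_atTop.comp tendsto_natCast_atTop_atTop) hbounded using 4 with n ω
  · rfl
  · rw [(fderiv ℝ φ θ).apply_eq_sum_apply_single_mul]
    simp only [← hV, Function.comp_apply, Pi.smul_apply, Pi.sub_apply, smul_eq_mul]

/-- **Multivariate delta method.**
Let `θ ∈ ℝ^q` and `(X_n)` be random vectors with `√n (X_n - θ) →ᵈ N(0, Σ)`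
(centered Gaussian on `ℝ^q` with covariance `Σ`), and let `φ : ℝ^q → ℝ` be
(measurable and) continuously differentiable in a neighbourhood of `θ` with
gradient `V = ∇φ(θ)`.  Then `√n (φ(X_n) - φ(θ)) →ᵈ N(0, Vᵀ Σ V)`.
Multivariate convergence in distribution is expressed via the Cramér–Wold
device, and one-dimensional convergence in distribution as convergence of CDFs
at every continuity point of the limit CDF (the continuity points of the CDF of
`N(0,s)` are exactly the points with zero mass, which is every point if `s > 0`
and every `t ≠ 0` if `s = 0`). -/
theorem multivariate_delta_method
    {q : ℕ} {Ω : Type*} [MeasurableSpace Ω] (P : Measure Ω) [IsProbabilityMeasure P]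
    (θ : Fin q → ℝ) (X : ℕ → Ω → (Fin q → ℝ)) (hX_meas : ∀ n, Measurable (X n))
    (Sig : Matrix (Fin q) (Fin q) ℝ)
    (hconv : ∀ v : Fin q → ℝ, ∀ t : ℝ,
      gaussianReal 0 (∑ i, ∑ j, v i * Sig i j * v j).toNNReal {t} = 0 →
      Tendsto
        (fun n : ℕ => P {ω | ∑ i, v i * (Real.sqrt n * (X n ω i - θ i)) ≤ t})
        atTop
        (nhds (gaussianReal 0 (∑ i, ∑ j, v i * Sig i j * v j).toNNReal (Set.Iic t))))
    (φ : (Fin q → ℝ) → ℝ) (hφ_meas : Measurable φ)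
    (hφ : ∃ u ∈ nhds θ, ContDiffOn ℝ 1 φ u)
    (V : Fin q → ℝ) (hV : ∀ i, V i = fderiv ℝ φ θ (Pi.single i 1)) :
    ∀ t : ℝ,
      gaussianReal 0 (∑ i, ∑ j, V i * Sig i j * V j).toNNReal {t} = 0 →
      Tendsto (fun n : ℕ => P {ω | Real.sqrt n * (φ (X n ω) - φ θ) ≤ t})
        atTop
        (nhds (gaussianReal 0 (∑ i, ∑ j, V i * Sig i j * V j).toNNReal (Set.Iic t))) :=
  multivariate_delta_method_general P θ X Sig hconv φ hφ V hV
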